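/- arXiv:2005.07835 — 3 statements merged into one kernel-verified Lean document; each statement's English description precedes it below -/
import Mathlib

section
/- Let k ≥ 2 be an integer and let G be a connected finite simple graph with Δ(G) ≥ k satisfying γ_k(G) = γ(G) + k − 2, and let D be a minimum k-dominating set of G. Then for every k distinct vertices v_1, …, v_k in D that have at least one common neighbor in G, there exist two distinct nonadjacent vertices x, y in V(G) \ D such that N(x) ∩ D = N(y) ∩ D = {v_1, …, v_k}. -/
/-- `D` is a `k`-dominating set of `G`: every vertex outside `D` has
at least `k` neighbors in `D`. -/
def IsKDomSet {V : Type*} (G : SimpleGraph V) (k : ℕ) (D : Set V) : Prop :=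
  ∀ v ∉ D, k ≤ (G.neighborSet v ∩ D).ncard

/-- The `k`-domination number: minimum cardinality of a `k`-dominating set. -/
noncomputable def kdomNum {V : Type*} (G : SimpleGraph V) (k : ℕ) : ℕ :=
  sInf {n | ∃ D : Set V, IsKDomSet G k D ∧ D.ncard = n}

/-!
Let `z` be a common neighbour of `S`. The set `(D \ S) ∪ {z}` has `γ_k - k + 1 = γ - 1` elements,
so it is not dominating: some vertex `x` has no neighbour in it. Then `x ∉ D`, `x` is neither
equal nor adjacent to `z`, and all neighbours of `x` in `D` lie in `S`; as `D` is `k`-dominating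
and `|S| = k`, they are exactly `S`. Now `x` is itself a common neighbour of `S`, and the same
argument with `z := x` produces `y`.
-/

section

variable {V : Type*} {G : SimpleGraph V} {k : ℕ} {D : Set V}

theorem IsKDomSet.kdomNum_le_ncard (hD : IsKDomSet G k D) : kdomNum G k ≤ D.ncard :=
  Nat.sInf_le ⟨D, hD, rfl⟩

theorem exists_forall_not_adj_of_ncard_lt_kdomNum_one [Finite V] {A : Set V}
    (hA : A.ncard < kdomNum G 1) : ∃ x ∉ A, ∀ a ∈ A, ¬ G.Adj x a := by
  have hnot : ¬ IsKDomSet G 1 A := fun h => hA.not_ge h.kdomNum_le_ncard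
  simp only [IsKDomSet, not_forall, not_le, Nat.lt_one_iff, exists_prop] at hnot
  obtain ⟨x, hxA, hx⟩ := hnot
  rw [Set.ncard_eq_zero] at hx
  exact ⟨x, hxA, fun a ha hxa => (Set.eq_empty_iff_forall_notMem.mp hx) a ⟨hxa, ha⟩⟩

theorem IsKDomSet.neighborSet_inter_eq [Finite V] (hD : IsKDomSet G k D) {x : V} (hx : x ∉ D)
    {S : Set V} (hS : S.ncard = k) (hsub : G.neighborSet x ∩ D ⊆ S) :
    G.neighborSet x ∩ D = S :=
  Set.eq_of_subset_of_ncard_le hsub (hS ▸ hD x hx)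

theorem IsKDomSet.exists_not_adj_neighborSet_inter_eq [Finite V] (hk : 2 ≤ k)
    (heq : kdomNum G k = kdomNum G 1 + (k - 2)) (hD : IsKDomSet G k D)
    (hmin : D.ncard = kdomNum G k) {S : Set V} (hS : S.ncard = k) (hSD : S ⊆ D)
    {z : V} (hz : ∀ v ∈ S, G.Adj z v) :
    ∃ x ∉ D, x ≠ z ∧ ¬ G.Adj z x ∧ G.neighborSet x ∩ D = S := by
  have hsmall : (D \ S ∪ {z}).ncard < kdomNum G 1 := by
    have hdiff : (D \ S).ncard = D.ncard - k := by rw [Set.ncard_sdiff hSD, hS]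
    have hkD : k ≤ D.ncard := hS ▸ Set.ncard_le_ncard hSD
    have hunion := Set.ncard_union_le (D \ S) {z}
    rw [Set.ncard_singleton] at hunion
    omega
  obtain ⟨x, hxA, hx⟩ := exists_forall_not_adj_of_ncard_lt_kdomNum_one hsmall
  have hxz : x ≠ z := fun h => hxA (Or.inr h)
  have hzx : ¬ G.Adj z x := fun h => hx z (Or.inr rfl) h.symm
  have hxS : x ∉ S := fun h => hzx (hz x h)
  have hxD : x ∉ D := fun h => hxA (Or.inl ⟨h, hxS⟩)
  refine ⟨x, hxD, hxz, hzx, hD.neighborSet_inter_eq hxD hS ?_⟩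
  rintro v ⟨hxv, hvD⟩
  by_contra hvS
  exact hx v (Or.inl ⟨hvD, hvS⟩) hxv

end

theorem statement3_general {V : Type*} [Fintype V] (G : SimpleGraph V)
    (k : ℕ) (hk : 2 ≤ k)
    (heq : kdomNum G k = kdomNum G 1 + (k - 2))
    (D : Set V) (hD : IsKDomSet G k D) (hmin : D.ncard = kdomNum G k)
    (S : Finset V) (hScard : S.card = k) (hSsub : ↑S ⊆ D)
    (hcommon : ∃ w : V, ∀ v ∈ S, G.Adj w v) :
    ∃ x y : V, x ≠ y ∧ x ∉ D ∧ y ∉ D ∧ ¬ G.Adj x y ∧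
      G.neighborSet x ∩ D = ↑S ∧ G.neighborSet y ∩ D = ↑S := by
  have hS : (S : Set V).ncard = k := by rw [Set.ncard_coe_finset, hScard]
  obtain ⟨w, hw⟩ := hcommon
  obtain ⟨x, hxD, -, -, hxN⟩ :=
    hD.exists_not_adj_neighborSet_inter_eq hk heq hmin hS hSsub (fun v hv => hw v hv)
  have hx : ∀ v ∈ (S : Set V), G.Adj x v := fun v hv => (hxN.symm.subset hv).1
  obtain ⟨y, hyD, hyx, hxy, hyN⟩ :=
    hD.exists_not_adj_neighborSet_inter_eq hk heq hmin hS hSsub hx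
  exact ⟨x, y, hyx.symm, hxD, hyD, hxy, hxN, hyN⟩

/-- Let `G` be a connected graph with `Δ(G) ≥ k ≥ 2` satisfying
`γ_k(G) = γ(G) + k − 2`, and let `D` be a minimum `k`-dominating set.
Then for every `k` distinct vertices of `D` (given as a `k`-element set `S`)
having a common neighbor, there are two distinct nonadjacent vertices
`x, y ∉ D` with `N(x) ∩ D = N(y) ∩ D = S`. -/
theorem statement3 {V : Type*} [Fintype V] (G : SimpleGraph V) [DecidableRel G.Adj]
    (k : ℕ) (hk : 2 ≤ k) (hΔ : k ≤ G.maxDegree) (hconn : G.Connected)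
    (heq : kdomNum G k = kdomNum G 1 + (k - 2))
    (D : Set V) (hD : IsKDomSet G k D) (hmin : D.ncard = kdomNum G k)
    (S : Finset V) (hScard : S.card = k) (hSsub : ↑S ⊆ D)
    (hcommon : ∃ w : V, ∀ v ∈ S, G.Adj w v) :
    ∃ x y : V, x ≠ y ∧ x ∉ D ∧ y ∉ D ∧ ¬ G.Adj x y ∧
      G.neighborSet x ∩ D = ↑S ∧ G.neighborSet y ∩ D = ↑S :=
  statement3_general G k hk heq D hD hmin S hScard hSsub hcommon
end

section
/- Let k ≥ 3 and let F be a connected k-uniform hypergraph with at least one edge, and let G be the double incidence graph of F. Then the domination number of G equals the TC-number of F, that is, γ(G) = tc(F). -/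
/-- Two vertices of a hypergraph are adjacent when some edge contains both. -/
def HyperAdj {V : Type*} (E : Finset (Finset V)) (u v : V) : Prop :=
  ∃ e ∈ E, u ∈ e ∧ v ∈ e

/-- A hypergraph is connected if any two vertices are joined by a sequence of
consecutively adjacent vertices. -/
def HyperConnected {V : Type*} (E : Finset (Finset V)) : Prop :=
  ∀ u v : V, Relation.ReflTransGen (HyperAdj E) u v

/-- The double incidence graph of a hypergraph with vertex type `V` and edge
family `E`: a bipartite graph on `V ⊕ (E × Bool)` in which `(e, j)` is
adjacent to `v : V` iff `v ∈ e`, and there are no other edges. -/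
def doubleIncidence {V : Type*} (E : Finset (Finset V)) :
    SimpleGraph (V ⊕ ({e // e ∈ E} × Bool)) :=
  SimpleGraph.fromRel fun a b =>
    ∃ (v : V) (e : {e // e ∈ E}) (j : Bool),
      a = Sum.inl v ∧ b = Sum.inr (e, j) ∧ v ∈ e.1

/-- `(T, R)` is a TC-set of the hypergraph with edge family `E`:
`T` is a transversal (meets every edge) and the edges in `R ⊆ E`
together cover every vertex outside `T`. -/
def IsTCSet {V : Type*} [DecidableEq V] (E : Finset (Finset V))
    (T : Finset V) (R : Finset (Finset V)) : Prop :=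
  (∀ e ∈ E, (e ∩ T).Nonempty) ∧ R ⊆ E ∧ ∀ v : V, v ∉ T → ∃ e ∈ R, v ∈ e

/-- The TC-number: the minimum of `|T| + |R|` over all TC-sets `(T, R)`. -/
noncomputable def tcNum {V : Type*} [DecidableEq V] (E : Finset (Finset V)) : ℕ :=
  sInf {n | ∃ T R, IsTCSet E T R ∧ T.card + R.card = n}

/-!
A TC-set `(T, R)` yields the dominating set `T ∪ {(e, false) | e ∈ R}` of size `|T| + |R|`.
Conversely, given a dominating set `D`, let `T` be its vertices from `V` together with one vertex
of every edge both of whose copies lie in `D`, and let `R` be the edges having a copy in `D`.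
An edge with a copy outside `D` meets `T`, because that copy is dominated by a vertex of `D`;
and `|T| + |R| ≤ |D|` since an edge with both copies in `D` is counted twice in `D`.
-/

lemma isKDomSet_one_iff {W : Type*} {G : SimpleGraph W} {D : Set W} (hD : D.Finite) :
    IsKDomSet G 1 D ↔ ∀ v ∉ D, ∃ w ∈ D, G.Adj v w := by
  refine forall₂_congr fun v _ => ?_
  rw [Nat.one_le_iff_ne_zero, ne_eq, Set.ncard_eq_zero (hD.subset Set.inter_subset_right)]
  simp [Set.eq_empty_iff_forall_notMem, and_comm]

lemma exists_isKDomSet_ncard_eq_kdomNum {W : Type*} (G : SimpleGraph W) (k : ℕ) :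
    ∃ D, IsKDomSet G k D ∧ D.ncard = kdomNum G k :=
  Nat.sInf_mem (s := {n | ∃ D, IsKDomSet G k D ∧ D.ncard = n})
    ⟨_, Set.univ, fun _ hv => (hv trivial).elim, rfl⟩

section DoubleIncidence

variable {V : Type*} {E : Finset (Finset V)}

@[simp]
lemma doubleIncidence_adj_inl_inr {v : V} {p : {e // e ∈ E} × Bool} :
    (doubleIncidence E).Adj (.inl v) (.inr p) ↔ v ∈ p.1.1 := by
  simp only [doubleIncidence, SimpleGraph.fromRel_adj]
  aesop

@[simp]
lemma doubleIncidence_adj_inr_inl {v : V} {p : {e // e ∈ E} × Bool} :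
    (doubleIncidence E).Adj (.inr p) (.inl v) ↔ v ∈ p.1.1 := by
  rw [SimpleGraph.adj_comm, doubleIncidence_adj_inl_inr]

@[simp]
lemma not_doubleIncidence_adj_inl_inl {v w : V} :
    ¬ (doubleIncidence E).Adj (.inl v) (.inl w) := by
  simp [doubleIncidence]

@[simp]
lemma not_doubleIncidence_adj_inr_inr {p q : {e // e ∈ E} × Bool} :
    ¬ (doubleIncidence E).Adj (.inr p) (.inr q) := by
  simp [doubleIncidence]

lemma isKDomSet_one_doubleIncidence_iff {D : Set (V ⊕ ({e // e ∈ E} × Bool))} (hD : D.Finite) :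
    IsKDomSet (doubleIncidence E) 1 D ↔
      (∀ v, .inl v ∉ D → ∃ p, .inr p ∈ D ∧ v ∈ p.1.1) ∧
      (∀ p, .inr p ∉ D → ∃ v, .inl v ∈ D ∧ v ∈ p.1.1) := by
  rw [isKDomSet_one_iff hD, Sum.forall]
  simp only [Sum.exists, doubleIncidence_adj_inl_inr, doubleIncidence_adj_inr_inl,
    not_doubleIncidence_adj_inl_inl, not_doubleIncidence_adj_inr_inr, and_false, exists_false,
    false_or, or_false]

end DoubleIncidence

open Finset

lemma Finset.card_eq_card_fiber_false_add_card_fiber_true {α : Type*} [Fintype α]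
    [DecidableEq α] (S : Finset (α × Bool)) :
    #S = #{a | (a, false) ∈ S} + #{a | (a, true) ∈ S} := by
  let A : Finset α := {a | (a, false) ∈ S}
  let B : Finset α := {a | (a, true) ∈ S}
  have hS : S = A ×ˢ {false} ∪ B ×ˢ {true} := by
    ext ⟨a, b⟩
    cases b <;> simp [A, B]
  rw [hS, card_union_of_disjoint (by simp [disjoint_left]), card_product, card_product]
  simp [A, B]

section TCSet

variable {V : Type*} [DecidableEq V] {E : Finset (Finset V)}

lemma exists_isTCSet_card_add_card_eq_tcNum [Fintype V] (hE : ∀ e ∈ E, e.Nonempty) :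
    ∃ T R, IsTCSet E T R ∧ #T + #R = tcNum E :=
  Nat.sInf_mem (s := {n | ∃ T R, IsTCSet E T R ∧ #T + #R = n})
    ⟨_, univ, ∅, ⟨fun e he => by simpa using hE e he, empty_subset _,
      fun v hv => (hv (mem_univ v)).elim⟩, rfl⟩

lemma kdomNum_le_of_isTCSet {T : Finset V} {R : Finset (Finset V)} (h : IsTCSet E T R) :
    kdomNum (doubleIncidence E) 1 ≤ #T + #R := by
  obtain ⟨hT, hRE, hR⟩ := h
  let D := T.disjSum (R.subtype (· ∈ E) ×ˢ {false})
  have hD : IsKDomSet (doubleIncidence E) 1 (D : Set _) := by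
    refine (isKDomSet_one_doubleIncidence_iff D.finite_toSet).2 ⟨fun v hv => ?_, fun p _ => ?_⟩
    · obtain ⟨e, he, hve⟩ := hR v (by simpa [D] using hv)
      exact ⟨(⟨e, hRE he⟩, false), by simpa [D], hve⟩
    · obtain ⟨v, hv⟩ := hT p.1.1 p.1.2
      exact ⟨v, by simp [D, (mem_inter.1 hv).2], (mem_inter.1 hv).1⟩
  calc kdomNum (doubleIncidence E) 1 ≤ Set.ncard (D : Set (V ⊕ ({e // e ∈ E} × Bool))) :=
        Nat.sInf_le ⟨_, hD, rfl⟩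
    _ = #T + #R := by
      rw [Set.ncard_coe_finset, card_disjSum, card_product, card_subtype,
        filter_true_of_mem hRE, card_singleton, mul_one]

lemma tcNum_le_card_of_isKDomSet [Fintype V] (hE : ∀ e ∈ E, e.Nonempty)
    {D : Finset (V ⊕ ({e // e ∈ E} × Bool))} (hD : IsKDomSet (doubleIncidence E) 1 D) :
    tcNum E ≤ #D := by
  obtain ⟨hV, hEdge⟩ := (isKDomSet_one_doubleIncidence_iff D.finite_toSet).1 hD
  simp only [mem_coe] at hV hEdge
  choose pick hpick using fun e : {e // e ∈ E} => hE e.1 e.2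
  let A : Finset {e // e ∈ E} := {e | .inr (e, false) ∈ D}
  let B : Finset {e // e ∈ E} := {e | .inr (e, true) ∈ D}
  let T := D.toLeft ∪ (A ∩ B).image pick
  let R := (A ∪ B).map (Function.Embedding.subtype _)
  have hTR : IsTCSet E T R := by
    refine ⟨fun e he => ?_, ?_, fun v hv => ?_⟩
    · by_cases hboth : (⟨e, he⟩ : {e // e ∈ E}) ∈ A ∩ B
      · exact ⟨pick ⟨e, he⟩,
          mem_inter.2 ⟨hpick _, mem_union_right _ (mem_image_of_mem _ hboth)⟩⟩
      · obtain ⟨j, hj⟩ : ∃ j, .inr (⟨e, he⟩, j) ∉ D := by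
          by_contra! h
          exact hboth (by simp [A, B, h])
        obtain ⟨v, hvD, hve⟩ := hEdge _ hj
        exact ⟨v, mem_inter.2 ⟨hve, mem_union_left _ (mem_toLeft.2 hvD)⟩⟩
    · intro f hf
      obtain ⟨e, -, rfl⟩ := mem_map.1 hf
      exact e.2
    · obtain ⟨p, hpD, hvp⟩ := hV v (fun h => hv (mem_union_left _ (mem_toLeft.2 h)))
      refine ⟨p.1.1, mem_map_of_mem _ ?_, hvp⟩
      rcases p with ⟨e, _ | _⟩ <;> simp [A, B, hpD]
  calc tcNum E ≤ #T + #R := Nat.sInf_le ⟨T, R, hTR, rfl⟩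
    _ ≤ #D.toLeft + #(A ∩ B) + #(A ∪ B) := by
      grw [card_union_le, card_image_le, card_map]
    _ = #D.toLeft + (#A + #B) := by rw [← card_union_add_card_inter A B]; ring
    _ = #D := by
      rw [← card_toLeft_add_card_toRight (u := D),
        card_eq_card_fiber_false_add_card_fiber_true D.toRight]
      simp [A, B]

end TCSet

theorem statement12_general {V : Type*} [Fintype V] [DecidableEq V] (E : Finset (Finset V))
    (k : ℕ) (hk : 3 ≤ k) (huni : ∀ e ∈ E, e.card = k) :
    kdomNum (doubleIncidence E) 1 = tcNum E := by
  have hE : ∀ e ∈ E, e.Nonempty := fun e he => card_pos.mp (by rw [huni e he]; omega)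
  apply le_antisymm
  · obtain ⟨T, R, hTR, hcard⟩ := exists_isTCSet_card_add_card_eq_tcNum hE
    exact hcard ▸ kdomNum_le_of_isTCSet hTR
  · obtain ⟨D, hD, hcard⟩ := exists_isKDomSet_ncard_eq_kdomNum (doubleIncidence E) 1
    obtain ⟨D, rfl⟩ := D.toFinite.exists_finset_coe
    rw [← hcard, Set.ncard_coe_finset]
    exact tcNum_le_card_of_isKDomSet hE hD

/-- Let `k ≥ 3` and let `F` be a connected `k`-uniform hypergraph with at
least one edge, and let `G` be its double incidence graph. Then
`γ(G) = tc(F)`. -/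
theorem statement12 {V : Type*} [Fintype V] [DecidableEq V] (E : Finset (Finset V))
    (k : ℕ) (hk : 3 ≤ k) (huni : ∀ e ∈ E, e.card = k) (hne : E.Nonempty)
    (hconn : HyperConnected E) :
    kdomNum (doubleIncidence E) 1 = tcNum E :=
  statement12_general E k hk huni
end

section
/- Let G be a connected bipartite finite simple graph with Δ(G) ≥ 3 satisfying γ_3(G) = γ(G) + 1, and let D be a minimum 3-dominating set of G. Let H be the simple graph on vertex set D in which two distinct vertices u, v are adjacent if and only if their distance in G is at most 2. Then H is a threshold graph; equivalently, H contains no induced subgraph isomorphic to 2K_2 (two disjoint edges on four vertices), P_4 (the path on four vertices), or C_4 (the cycle on four vertices). -/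
/-- The graph on the vertex set `D` in which two distinct vertices are
adjacent iff their distance in `G` is at most 2. -/
def distTwoGraph {V : Type*} (G : SimpleGraph V) (D : Set V) : SimpleGraph D where
  Adj u v := u ≠ v ∧ G.dist u v ≤ 2
  symm := by
    constructor
    intro u v h
    exact ⟨h.1.symm, by rw [SimpleGraph.dist_comm]; exact h.2⟩
  loopless := ⟨fun u h => h.1 rfl⟩

/-!
Suppose two edges `ab` and `cd` of the distance-two graph on `D` were unlinked, i.e.
`d(a, c) > 2` and `d(b, d) > 2`. By connectivity some vertex `p` (an endpoint or a common
neighbour) dominates `{a, b}`, and some `q` dominates `{c, d}`. Replacing `a, b, c, d` by `p, q`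
in `D` yields a dominating set: a vertex outside `D` is adjacent to at most one of `a, c` and to at
most one of `b, d`, so it keeps one of its at least three neighbours in `D`. Hence
`γ(G) ≤ γ₃(G) - 2`, contradicting `γ₃(G) = γ(G) + 1`. Each of `2K₂`, `P₄` and `C₄` contains such
an unlinked pair of edges.
-/

lemma Set.ncard_pair_le {α : Type*} (x y : α) : ({x, y} : Set α).ncard ≤ 2 :=
  (Set.ncard_insert_le x {y}).trans_eq (by rw [Set.ncard_singleton])

section

variable {V : Type*} {G : SimpleGraph V}

lemma kdomNum_le_ncard {k : ℕ} {S : Set V} (hS : IsKDomSet G k S) : kdomNum G k ≤ S.ncard :=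
  Nat.sInf_le ⟨S, hS, rfl⟩

lemma isKDomSet_one_of_forall_exists_adj {S : Set V} (hS : S.Finite)
    (h : ∀ v ∉ S, ∃ s ∈ S, G.Adj v s) : IsKDomSet G 1 S := by
  intro v hv
  obtain ⟨s, hs, hvs⟩ := h v hv
  exact (Set.ncard_pos (hS.subset Set.inter_subset_right)).mpr ⟨s, hvs, hs⟩

lemma IsKDomSet.isKDomSet_one_sdiff_union {k : ℕ} {D X P : Set V} (hD : IsKDomSet G k D)
    (hDf : D.Finite) (hXf : X.Finite) (hPf : P.Finite)
    (hX : ∀ v ∉ D, (G.neighborSet v ∩ X).ncard < k)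
    (hP : ∀ x ∈ X \ P, ∃ p ∈ P, G.Adj x p) : IsKDomSet G 1 (D \ X ∪ P) := by
  refine isKDomSet_one_of_forall_exists_adj ((hDf.sdiff).union hPf) fun v hv => ?_
  simp only [Set.mem_union, Set.mem_sdiff, not_or, not_and, not_not] at hv
  by_cases hvD : v ∈ D
  · obtain ⟨p, hp, hvp⟩ := hP v ⟨hv.1 hvD, hv.2⟩
    exact ⟨p, Or.inr hp, hvp⟩
  · by_contra! hno
    have hsub : G.neighborSet v ∩ D ⊆ G.neighborSet v ∩ X := fun s ⟨hvs, hs⟩ =>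
      ⟨hvs, by_contra fun hsX => hno s (Or.inl ⟨hs, hsX⟩) hvs⟩
    have := Set.ncard_le_ncard hsub (hXf.subset Set.inter_subset_right)
    have := hD v hvD
    have := hX v hvD
    omega

lemma ncard_neighborSet_inter_le_two {a b c d : V} (hac : ∀ w, G.Adj w a → ¬ G.Adj w c)
    (hbd : ∀ w, G.Adj w b → ¬ G.Adj w d) (v : V) :
    (G.neighborSet v ∩ {a, b, c, d}).ncard ≤ 2 := by
  classical
  obtain ⟨e, f, hsub⟩ : ∃ e f, G.neighborSet v ∩ {a, b, c, d} ⊆ {e, f} := by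
    refine ⟨if G.Adj v a then a else c, if G.Adj v b then b else d, ?_⟩
    rintro x ⟨hvx, rfl | rfl | rfl | rfl⟩ <;> grind [SimpleGraph.mem_neighborSet]
  exact (Set.ncard_le_ncard hsub).trans (Set.ncard_pair_le e f)

lemma exists_eq_or_adj_of_dist_le_two {u v : V} (hr : G.Reachable u v) (h : G.dist u v ≤ 2) :
    ∃ p, (u = p ∨ G.Adj u p) ∧ (v = p ∨ G.Adj v p) := by
  have hle : G.edist u v ≤ 2 := by rw [← hr.coe_dist_eq_edist]; exact_mod_cast h
  obtain hle | heq : G.edist u v ≤ 1 ∨ G.edist u v = 2 := by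
    rcases hle.lt_or_eq with hlt | heq
    · exact Or.inl (Order.le_of_lt_add_one hlt)
    · exact Or.inr heq
  · obtain hadj | rfl := SimpleGraph.edist_le_one_iff_adj_or_eq.mp hle
    · exact ⟨v, Or.inr hadj, Or.inl rfl⟩
    · exact ⟨u, Or.inl rfl, Or.inl rfl⟩
  · obtain ⟨w, hw⟩ := (SimpleGraph.edist_eq_two_iff.mp heq).2.2
    rw [SimpleGraph.mem_commonNeighbors] at hw
    exact ⟨w, Or.inr hw.1, Or.inr hw.2⟩

lemma not_adj_of_two_lt_dist {u v w : V} (h : ¬ G.dist u v ≤ 2) (hu : G.Adj w u) :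
    ¬ G.Adj w v := fun hv =>
  h <| (SimpleGraph.dist_le (.cons hu.symm (.cons hv .nil))).trans (by simp)

theorem IsKDomSet.kdomNum_one_add_two_le {D : Set V} (hD : IsKDomSet G 3 D) (hDf : D.Finite)
    {a b c d p q : V} (ha : a ∈ D) (hb : b ∈ D) (hc : c ∈ D) (hd : d ∈ D)
    (hab : a ≠ b) (hac : a ≠ c) (had : a ≠ d) (hbc : b ≠ c) (hbd : b ≠ d) (hcd : c ≠ d)
    (hpa : a = p ∨ G.Adj a p) (hpb : b = p ∨ G.Adj b p)
    (hqc : c = q ∨ G.Adj c q) (hqd : d = q ∨ G.Adj d q)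
    (hfac : ∀ w, G.Adj w a → ¬ G.Adj w c) (hfbd : ∀ w, G.Adj w b → ¬ G.Adj w d) :
    kdomNum G 1 + 2 ≤ D.ncard := by
  have hS : IsKDomSet G 1 (D \ {a, b, c, d} ∪ {p, q}) := by
    refine hD.isKDomSet_one_sdiff_union hDf (Set.toFinite _) (Set.toFinite _)
      (fun v _ => (ncard_neighborSet_inter_le_two hfac hfbd v).trans_lt (by norm_num)) ?_
    rintro x ⟨rfl | rfl | rfl | rfl, hx⟩ <;> simp only [Set.mem_insert_iff,
      Set.mem_singleton_iff, not_or] at hx <;> grind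
  have hX : ({a, b, c, d} : Set V).ncard = 4 := by
    rw [Set.ncard_insert_of_notMem (by simp [*]), Set.ncard_insert_of_notMem (by simp [*]),
      Set.ncard_pair hcd]
  have hXD : ({a, b, c, d} : Set V) ⊆ D := by simp [Set.insert_subset_iff, *]
  calc kdomNum G 1 + 2 ≤ (D \ {a, b, c, d} ∪ {p, q}).ncard + 2 :=
        Nat.add_le_add_right (kdomNum_le_ncard hS) 2
    _ ≤ (D \ {a, b, c, d}).ncard + 4 := by
        grw [Set.ncard_union_le, Set.ncard_pair_le]
    _ = D.ncard := by
        rw [Set.ncard_sdiff hXD, hX]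
        have := Set.ncard_le_ncard hXD hDf
        omega

theorem distTwoGraph_adj_or_adj_of_kdomNum_eq (hconn : G.Connected)
    (heq : kdomNum G 3 = kdomNum G 1 + 1) {D : Set V} (hD : IsKDomSet G 3 D)
    (hmin : D.ncard = kdomNum G 3) {a b c d : D}
    (hab : a ≠ b) (hac : a ≠ c) (had : a ≠ d) (hbc : b ≠ c) (hbd : b ≠ d) (hcd : c ≠ d)
    (hadj_ab : (distTwoGraph G D).Adj a b) (hadj_cd : (distTwoGraph G D).Adj c d) :
    (distTwoGraph G D).Adj a c ∨ (distTwoGraph G D).Adj b d := by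
  by_contra! hfar
  have hfac : ¬ G.dist a c ≤ 2 := fun h => hfar.1 ⟨hac, h⟩
  have hfbd : ¬ G.dist b d ≤ 2 := fun h => hfar.2 ⟨hbd, h⟩
  obtain ⟨p, hpa, hpb⟩ := exists_eq_or_adj_of_dist_le_two (hconn.preconnected a b) hadj_ab.2
  obtain ⟨q, hqc, hqd⟩ := exists_eq_or_adj_of_dist_le_two (hconn.preconnected c d) hadj_cd.2
  -- `ncard` vanishes on infinite sets, which `heq` and `hmin` exclude
  have hDf : D.Finite := Set.finite_of_ncard_ne_zero (by omega)
  have := hD.kdomNum_one_add_two_le hDf a.2 b.2 c.2 d.2 (Subtype.coe_ne_coe.mpr hab)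
    (Subtype.coe_ne_coe.mpr hac) (Subtype.coe_ne_coe.mpr had) (Subtype.coe_ne_coe.mpr hbc)
    (Subtype.coe_ne_coe.mpr hbd) (Subtype.coe_ne_coe.mpr hcd) hpa hpb hqc hqd
    (fun _ => not_adj_of_two_lt_dist hfac) (fun _ => not_adj_of_two_lt_dist hfbd)
  omega

end

theorem statement19_general {V : Type*} (G : SimpleGraph V)
    (hconn : G.Connected)
    (heq : kdomNum G 3 = kdomNum G 1 + 1)
    (D : Set V) (hD : IsKDomSet G 3 D) (hmin : D.ncard = kdomNum G 3) :
    ∀ a b c d : D, a ≠ b → a ≠ c → a ≠ d → b ≠ c → b ≠ d → c ≠ d →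
      -- no induced `2K_2` on `a, b, c, d` (edges `ab`, `cd` only)
      ¬((distTwoGraph G D).Adj a b ∧ (distTwoGraph G D).Adj c d ∧
          ¬(distTwoGraph G D).Adj a c ∧ ¬(distTwoGraph G D).Adj a d ∧
          ¬(distTwoGraph G D).Adj b c ∧ ¬(distTwoGraph G D).Adj b d) ∧
      -- no induced `P_4` on `a, b, c, d` (path `a-b-c-d`)
      ¬((distTwoGraph G D).Adj a b ∧ (distTwoGraph G D).Adj b c ∧
          (distTwoGraph G D).Adj c d ∧ ¬(distTwoGraph G D).Adj a c ∧
          ¬(distTwoGraph G D).Adj a d ∧ ¬(distTwoGraph G D).Adj b d) ∧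
      -- no induced `C_4` on `a, b, c, d` (cycle `a-b-c-d-a`)
      ¬((distTwoGraph G D).Adj a b ∧ (distTwoGraph G D).Adj b c ∧
          (distTwoGraph G D).Adj c d ∧ (distTwoGraph G D).Adj a d ∧
          ¬(distTwoGraph G D).Adj a c ∧ ¬(distTwoGraph G D).Adj b d) := by
  intro a b c d hab hac had hbc hbd hcd
  have linked : (distTwoGraph G D).Adj a b → (distTwoGraph G D).Adj c d →
      (distTwoGraph G D).Adj a c ∨ (distTwoGraph G D).Adj b d :=
    distTwoGraph_adj_or_adj_of_kdomNum_eq hconn heq hD hmin hab hac had hbc hbd hcd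
  refine ⟨?_, ?_, ?_⟩ <;> rintro ⟨h₁, h₂, h₃, h₄, h₅, h₆⟩
  · exact (linked h₁ h₂).elim h₃ h₆
  · exact (linked h₁ h₃).elim h₄ h₆
  · exact (linked h₁ h₃).elim h₅ h₆

/-- Let `G` be a connected bipartite graph with `Δ(G) ≥ 3` satisfying
`γ_3(G) = γ(G) + 1`, let `D` be a minimum 3-dominating set, and let `H` be
the graph on `D` where two distinct vertices are adjacent iff their distance
in `G` is at most 2. Then `H` is a threshold graph: it has no induced
subgraph isomorphic to `2K_2`, `P_4` or `C_4`. -/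
theorem statement19 {V : Type*} [Fintype V] (G : SimpleGraph V) [DecidableRel G.Adj]
    (hconn : G.Connected)
    (hbip : ∃ A : Set V, ∀ u v : V, G.Adj u v → (u ∈ A ↔ v ∉ A))
    (hΔ : 3 ≤ G.maxDegree)
    (heq : kdomNum G 3 = kdomNum G 1 + 1)
    (D : Set V) (hD : IsKDomSet G 3 D) (hmin : D.ncard = kdomNum G 3) :
    ∀ a b c d : D, a ≠ b → a ≠ c → a ≠ d → b ≠ c → b ≠ d → c ≠ d →
      -- no induced `2K_2` on `a, b, c, d` (edges `ab`, `cd` only)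
      ¬((distTwoGraph G D).Adj a b ∧ (distTwoGraph G D).Adj c d ∧
          ¬(distTwoGraph G D).Adj a c ∧ ¬(distTwoGraph G D).Adj a d ∧
          ¬(distTwoGraph G D).Adj b c ∧ ¬(distTwoGraph G D).Adj b d) ∧
      -- no induced `P_4` on `a, b, c, d` (path `a-b-c-d`)
      ¬((distTwoGraph G D).Adj a b ∧ (distTwoGraph G D).Adj b c ∧
          (distTwoGraph G D).Adj c d ∧ ¬(distTwoGraph G D).Adj a c ∧
          ¬(distTwoGraph G D).Adj a d ∧ ¬(distTwoGraph G D).Adj b d) ∧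
      -- no induced `C_4` on `a, b, c, d` (cycle `a-b-c-d-a`)
      ¬((distTwoGraph G D).Adj a b ∧ (distTwoGraph G D).Adj b c ∧
          (distTwoGraph G D).Adj c d ∧ (distTwoGraph G D).Adj a d ∧
          ¬(distTwoGraph G D).Adj a c ∧ ¬(distTwoGraph G D).Adj b d) :=
  statement19_general G hconn heq D hD hmin
end
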